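/- For every x ∈ (0, 1/2], the function Ψ satisfies the functional equation Ψ(x) = 2x + T(x)·Ψ(I(x)); note that I(x) ∈ [0, 1/2], so the right-hand side is defined. Moreover Ψ(0) = 0. -/

import Mathlib

/-- `T(x) = x·(1 + {1/x})` for `x ≠ 0`, `T(0) = 0`. -/
noncomputable def Tmap (x : ℝ) : ℝ := if x = 0 then 0 else x * (1 + Int.fract (1 / x))

/-- `I(x) = {1/x} / (1 + {1/x})` for `x ≠ 0`, `I(0) = 0`. -/
noncomputable def Imap (x : ℝ) : ℝ :=
  if x = 0 then 0 else Int.fract (1 / x) / (1 + Int.fract (1 / x))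

/-- `Ψ(x) = 2x + 2·Σ_{j ≥ 1} T(x)·T(I(x))·⋯·T(I^{j-1}(x))·I^{j}(x)`. -/
noncomputable def Psi (x : ℝ) : ℝ :=
  2 * x + 2 * ∑' j : ℕ, (∏ i ∈ Finset.range (j + 1), Tmap (Imap^[i] x)) * Imap^[j + 1] x

/-!
The series defining `Ψ` is a sum over the orbit of `I` of products of a "cocycle" `T`, so
peeling off its first factor `T(x)` turns the tail into the same series started at `I(x)`.
This is legitimate once the series converges, and it does: `I` maps everything into
`[0, 1/2]`, where `0 ≤ T ≤ 2/3`, so the terms are dominated by `(2/3)^(j+1)`.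
At `0` every iterate of `I` vanishes.
-/

open Finset

section OrbitSeries

variable {α : Type*} (T g : α → ℝ) (I : α → α)

lemma summable_prod_iterate_mul {q C : ℝ} {x : α} (hq : q < 1)
    (hT : ∀ i, 0 ≤ T (I^[i] x) ∧ T (I^[i] x) ≤ q)
    (hg : ∀ i, 0 ≤ g (I^[i] x) ∧ g (I^[i] x) ≤ C) :
    Summable fun j : ℕ => (∏ i ∈ range (j + 1), T (I^[i] x)) * g (I^[j + 1] x) := by
  have hq0 : 0 ≤ q := (hT 0).1.trans (hT 0).2
  have hgeom : Summable fun j : ℕ => q ^ (j + 1) * C := by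
    simpa [pow_succ, mul_assoc] using
      (summable_geometric_of_lt_one hq0 hq).mul_right (q * C)
  refine hgeom.of_nonneg_of_le (fun j => ?_) (fun j => ?_)
  · exact mul_nonneg (prod_nonneg fun i _ => (hT i).1) (hg (j + 1)).1
  · calc (∏ i ∈ range (j + 1), T (I^[i] x)) * g (I^[j + 1] x)
        ≤ (∏ _i ∈ range (j + 1), q) * C :=
          mul_le_mul (prod_le_prod (fun i _ => (hT i).1) fun i _ => (hT i).2) (hg (j + 1)).2
            (hg (j + 1)).1 (prod_nonneg fun _ _ => hq0)
      _ = q ^ (j + 1) * C := by rw [prod_const, card_range]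

lemma tsum_prod_iterate_mul_eq {x : α}
    (hsum : Summable fun j : ℕ => (∏ i ∈ range (j + 1), T (I^[i] x)) * g (I^[j + 1] x)) :
    ∑' j : ℕ, (∏ i ∈ range (j + 1), T (I^[i] x)) * g (I^[j + 1] x) =
      T x * g (I x) +
        T x * ∑' j : ℕ, (∏ i ∈ range (j + 1), T (I^[i] (I x))) * g (I^[j + 1] (I x)) := by
  rw [hsum.tsum_eq_zero_add, ← tsum_mul_left]
  congr 1
  · simp
  · congr 1
    ext j
    rw [prod_range_succ' _ (j + 1)]
    simp only [Function.iterate_succ_apply, Function.iterate_zero_apply]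
    ring

end OrbitSeries

lemma Imap_mem_Icc (x : ℝ) : Imap x ∈ Set.Icc (0 : ℝ) (1 / 2) := by
  unfold Imap
  split_ifs
  · norm_num
  · have h0 := Int.fract_nonneg (1 / x)
    have h1 := Int.fract_lt_one (1 / x)
    refine ⟨by positivity, ?_⟩
    rw [div_le_iff₀ (by linarith)]
    linarith

lemma iterate_Imap_mem_Icc {x : ℝ} (hx : x ∈ Set.Icc (0 : ℝ) (1 / 2)) :
    ∀ i, Imap^[i] x ∈ Set.Icc (0 : ℝ) (1 / 2)
  | 0 => hx
  | i + 1 => by rw [Function.iterate_succ_apply']; exact Imap_mem_Icc _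

lemma Tmap_nonneg {x : ℝ} (hx : 0 ≤ x) : 0 ≤ Tmap x := by
  unfold Tmap
  split_ifs
  · exact le_rfl
  · have := Int.fract_nonneg (1 / x)
    positivity

/-- With `n = ⌊1/x⌋ ≥ 2`, `T(x) = 1 - (n - 1)x < 1 - (n - 1)/(n + 1) = 2/(n + 1)`. -/
lemma Tmap_le_two_thirds {x : ℝ} (hx : x ∈ Set.Icc (0 : ℝ) (1 / 2)) : Tmap x ≤ 2 / 3 := by
  unfold Tmap
  split_ifs with h
  · norm_num
  · have hx0 : 0 < x := lt_of_le_of_ne hx.1 (Ne.symm h)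
    have hinv : x * (1 / x) = 1 := by field_simp
    have hn : (2 : ℝ) ≤ ⌊1 / x⌋ := by
      have : (2 : ℝ) ≤ 1 / x := by rw [le_div_iff₀ hx0]; linarith [hx.2]
      exact_mod_cast Int.le_floor.mpr (by exact_mod_cast this)
    have hlt : 1 < x * (⌊1 / x⌋ + 1) := by
      calc 1 = x * (1 / x) := hinv.symm
        _ < x * (⌊1 / x⌋ + 1) := mul_lt_mul_of_pos_left (Int.lt_floor_add_one _) hx0
    rw [Int.fract]
    nlinarith [mul_nonneg (sub_pos.mpr hlt).le (show (0 : ℝ) ≤ ⌊1 / x⌋ - 1 by linarith)]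

lemma summable_Psi_series {x : ℝ} (hx : x ∈ Set.Icc (0 : ℝ) (1 / 2)) :
    Summable fun j : ℕ => (∏ i ∈ range (j + 1), Tmap (Imap^[i] x)) * Imap^[j + 1] x :=
  summable_prod_iterate_mul Tmap id Imap (q := 2 / 3) (C := 1 / 2) (by norm_num)
    (fun i => ⟨Tmap_nonneg (iterate_Imap_mem_Icc hx i).1,
      Tmap_le_two_thirds (iterate_Imap_mem_Icc hx i)⟩)
    (fun i => iterate_Imap_mem_Icc hx i)

lemma Psi_zero : Psi 0 = 0 := by
  have hfix : ∀ j : ℕ, Imap^[j] (0 : ℝ) = 0 := Function.iterate_fixed (by simp [Imap])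
  simp [Psi, hfix]

theorem stmt_12 :
    (∀ x ∈ Set.Ioc (0 : ℝ) (1 / 2),
      Imap x ∈ Set.Icc (0 : ℝ) (1 / 2) ∧ Psi x = 2 * x + Tmap x * Psi (Imap x)) ∧
    Psi 0 = 0 := by
  refine ⟨fun x hx => ⟨Imap_mem_Icc x, ?_⟩, Psi_zero⟩
  have hsplit := tsum_prod_iterate_mul_eq Tmap id Imap (summable_Psi_series ⟨hx.1.le, hx.2⟩)
  simp only [id] at hsplit
  rw [Psi, Psi, hsplit]
  ring
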